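/- Let X be a topological space, F a presheaf of abelian groups on X, and let (A_a)_{a ∈ I_A} and (B_b)_{b ∈ I_B} be two families of open sets of X. Write Z(𝒜) for the group of compatible families (σ_a)_a ∈ ∏_a F(A_a) (those with σ_a|_{A_a ∩ A_{a'}} = σ_{a'}|_{A_a ∩ A_{a'}} for all a, a'), similarly Z(ℬ) ⊆ ∏_b F(B_b), and Z(𝒰) for the group of compatible families over the combined family indexed by I_A ⊕ I_B (agreement required on all pairwise intersections, including the cross intersections A_a ∩ B_b). Then the map Z(𝒰) → Z(𝒜) × Z(ℬ) splitting a combined family into its two halves is an injective group homomorphism, and its range is exactly the kernel of the map Z(𝒜) × Z(ℬ) → ∏_{(a,b) ∈ I_A × I_B} F(A_a ∩ B_b) sending (σ^A, σ^B) to the family (a,b) ↦ σ^B_b|_{A_a ∩ B_b} − σ^A_a|_{A_a ∩ B_b}. That is, the sequence 0 → Ȟ⁰(𝒰, F) → Ȟ⁰(𝒜, F) ⊕ Ȟ⁰(ℬ, F) → ∏_{a,b} F(A_a ∩ B_b) is exact. (Paper: Theorem 5.3, the degree-0 portion of the Mayer–Vietoris exact sequence for a cover decomposed into sub-covers 𝒜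 and ℬ.) -/

import Mathlib

open CategoryTheory Opposite TopologicalSpace

/-- The group `Ȟ⁰` of compatible families over a family of opens `(U_i)`:
those `(σ_i)_i ∈ ∏ i, F(U_i)` with `σ_i|_{U_i ∩ U_j} = σ_j|_{U_i ∩ U_j}` for all
`i, j`. -/
def compatFamilies {X : TopCat} (F : TopCat.Presheaf AddCommGrpCat X) {ι : Type*}
    (U : ι → Opens X) : AddSubgroup (∀ i, F.obj (op (U i))) where
  carrier := {σ | ∀ i j,
    F.map (homOfLE (inf_le_left : U i ⊓ U j ≤ U i)).op (σ i)
      = F.map (homOfLE (inf_le_right : U i ⊓ U j ≤ U j)).op (σ j)}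
  zero_mem' := by intro i j; simp
  add_mem' {a b} ha hb := by intro i j; simp only [Pi.add_apply, map_add, ha i j, hb i j]
  neg_mem' {a} ha := by intro i j; simp only [Pi.neg_apply, map_neg, ha i j]

/-- Splitting a compatible family over the combined cover (indexed by `ιA ⊕ ιB`)
into its `𝒜`-half and its `ℬ`-half. -/
def splitFamilies {X : TopCat} (F : TopCat.Presheaf AddCommGrpCat X)
    {ιA ιB : Type*} (A : ιA → Opens X) (B : ιB → Opens X) :
    compatFamilies F (Sum.elim A B) →+ compatFamilies F A × compatFamilies F B where
  toFun σ :=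
    (⟨fun a => σ.1 (Sum.inl a), fun a a' => σ.2 (Sum.inl a) (Sum.inl a')⟩,
     ⟨fun b => σ.1 (Sum.inr b), fun b b' => σ.2 (Sum.inr b) (Sum.inr b')⟩)
  map_zero' := rfl
  map_add' a b := rfl

/-- The cross-difference map `Ȟ⁰(𝒜) ⊕ Ȟ⁰(ℬ) → ∏_{(a,b)} F(A_a ∩ B_b)`,
`(σᴬ, σᴮ) ↦ ((a,b) ↦ σᴮ_b|_{A_a ∩ B_b} − σᴬ_a|_{A_a ∩ B_b})`. -/
def crossDelta {X : TopCat} (F : TopCat.Presheaf AddCommGrpCat X)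
    {ιA ιB : Type*} (A : ιA → Opens X) (B : ιB → Opens X) :
    compatFamilies F A × compatFamilies F B →+
      ∀ p : ιA × ιB, F.obj (op (A p.1 ⊓ B p.2)) where
  toFun σ := fun p =>
    F.map (homOfLE (inf_le_right : A p.1 ⊓ B p.2 ≤ B p.2)).op (σ.2.1 p.2)
      - F.map (homOfLE (inf_le_left : A p.1 ⊓ B p.2 ≤ A p.1)).op (σ.1.1 p.1)
  map_zero' := by funext p; simp
  map_add' a b := by funext p; simp; abel

section

variable {X : TopCat} (F : TopCat.Presheaf AddCommGrpCat X)

theorem restrict_inf_symm {U V : Opens X} {s : F.obj (op U)} {t : F.obj (op V)}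
    (h : F.map (homOfLE (inf_le_left : U ⊓ V ≤ U)).op s
      = F.map (homOfLE (inf_le_right : U ⊓ V ≤ V)).op t) :
    F.map (homOfLE (inf_le_left : V ⊓ U ≤ V)).op t
      = F.map (homOfLE (inf_le_right : V ⊓ U ≤ U)).op s := by
  -- Both sides factor through the restriction from `U ⊓ V`, where they agree by `h`.
  have hswap : V ⊓ U ≤ U ⊓ V := (inf_comm V U).le
  have restrict_comp {W : Opens X} (hW : U ⊓ V ≤ W) (u : F.obj (op W)) :
      F.map (homOfLE (hswap.trans hW)).op u
        = F.map (homOfLE hswap).op (F.map (homOfLE hW).op u) := by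
    rw [← CategoryTheory.comp_apply, ← F.map_comp, ← op_comp, homOfLE_comp]
  rw [restrict_comp inf_le_right, restrict_comp inf_le_left, h]

variable {ιA ιB : Type*} (A : ιA → Opens X) (B : ιB → Opens X)

theorem splitFamilies_injective : Function.Injective (splitFamilies F A B) := by
  intro σ τ h
  ext (a | b)
  · exact congrFun (congrArg (fun x => x.1.1) h) a
  · exact congrFun (congrArg (fun x => x.2.1) h) b

theorem crossDelta_eq_zero_iff (x : compatFamilies F A × compatFamilies F B) :
    crossDelta F A B x = 0 ↔ ∀ a b,
      F.map (homOfLE (inf_le_left : A a ⊓ B b ≤ A a)).op (x.1.1 a)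
        = F.map (homOfLE (inf_le_right : A a ⊓ B b ≤ B b)).op (x.2.1 b) := by
  simp only [funext_iff, Prod.forall]
  exact forall₂_congr fun a b => sub_eq_zero.trans eq_comm

theorem sumRec_mem_compatFamilies {σA : ∀ a, F.obj (op (A a))} {σB : ∀ b, F.obj (op (B b))}
    (hA : σA ∈ compatFamilies F A) (hB : σB ∈ compatFamilies F B)
    (hAB : ∀ a b, F.map (homOfLE (inf_le_left : A a ⊓ B b ≤ A a)).op (σA a)
      = F.map (homOfLE (inf_le_right : A a ⊓ B b ≤ B b)).op (σB b)) :
    (fun i => Sum.rec σA σB i : ∀ i, F.obj (op (Sum.elim A B i))) ∈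
      compatFamilies F (Sum.elim A B) := by
  rintro (a | b) (a' | b')
  · exact hA a a'
  · exact hAB a b'
  · exact restrict_inf_symm F (hAB a' b)
  · exact hB b b'

theorem range_splitFamilies :
    Set.range (splitFamilies F A B) = {x | crossDelta F A B x = 0} := by
  ext x
  rw [Set.mem_ofPred_eq, crossDelta_eq_zero_iff]
  constructor
  · rintro ⟨σ, rfl⟩ a b
    exact σ.2 (Sum.inl a) (Sum.inr b)
  · intro hx
    exact ⟨⟨_, sumRec_mem_compatFamilies F A B x.1.2 x.2.2 hx⟩, rfl⟩

end

/-- **Degree-0 Mayer–Vietoris** (Paper: Theorem 5.3). For two families of opens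
`𝒜 = (A_a)` and `ℬ = (B_b)` and the combined family `𝒰` indexed by `ιA ⊕ ιB`,
the splitting map `Ȟ⁰(𝒰, F) → Ȟ⁰(𝒜, F) ⊕ Ȟ⁰(ℬ, F)` is an injective group
homomorphism whose range is exactly the kernel of the cross-difference map
into `∏_{(a,b)} F(A_a ∩ B_b)`: the sequence
`0 → Ȟ⁰(𝒰, F) → Ȟ⁰(𝒜, F) ⊕ Ȟ⁰(ℬ, F) → ∏_{a,b} F(A_a ∩ B_b)` is exact. -/
theorem mayerVietoris_degree_zero {X : TopCat} (F : TopCat.Presheaf AddCommGrpCat X)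
    {ιA ιB : Type*} (A : ιA → Opens X) (B : ιB → Opens X) :
    Function.Injective (splitFamilies F A B)
    ∧ Set.range (splitFamilies F A B) = {x | crossDelta F A B x = 0} :=
  ⟨splitFamilies_injective F A B, range_splitFamilies F A B⟩
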